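/- Let K be a field with surjective discrete valuation v : Kˣ → ℤ, let e ≥ 1, and let Λ be a subgroup of Kˣ with v(Λ) = eℤ. Let Π be a subspace of K^n, let X ⊆ Π satisfy λ·X = X for all λ ∈ Λ, and let π : K^n → K^m be a K-linear map whose restriction to Π is injective. For 0 ≤ i ≤ e−1 set A_i = {λ·π(x) : λ ∈ Λ, x ∈ X \ {0}, v(x) = i}. Then π(X) \ {0} is the union of A_0, …, A_{e−1}, and the sets A_0, …, A_{e−1} are pairwise disjoint. -/

import Mathlib

open Pointwise

/-- The minimum of the coordinate valuations of a vector `x ∈ K^n`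
(with value `⊤` for `x = 0`). -/
def vmin {K : Type*} (v : K → WithTop ℤ) {n : ℕ} (x : Fin n → K) : WithTop ℤ :=
  Finset.univ.inf fun j => v (x j)

/-!
A nonzero `x ∈ X` with `vmin x = d` can be rescaled inside `X` by an element of `Λ` of
valuation `-(e * (d / e))`, which exists since `v(Λ) = eℤ`; this moves it to valuation `d % e`
without changing the `Λ`-orbit of `π x`, so the layers cover `π(X) \ {0}`. Conversely, if
`λ₁ • π x₁ = λ₂ • π x₂` then `λ₁ • x₁ = λ₂ • x₂` by injectivity, and comparing valuations gives
`i ≡ j (mod e)`, hence `i = j` for `0 ≤ i, j < e`.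
-/

section VectorValuation

variable {K : Type*} [Field K] {v : K → WithTop ℤ} {n : ℕ}

theorem vmin_smul (hvmul : ∀ a b : K, v (a * b) = v a + v b) (c : K) (x : Fin n → K) :
    vmin v (c • x) = v c + vmin v x := by
  simp only [vmin, Pi.smul_apply, smul_eq_mul, hvmul]
  exact (Finset.apply_inf_eq_inf_comp (v c + ·) (fun a b => (min_add_add_left _ a b).symm)
    (WithTop.add_top _)).symm

theorem vmin_eq_top_iff (hv0 : ∀ a : K, v a = ⊤ ↔ a = 0) {x : Fin n → K} :
    vmin v x = ⊤ ↔ x = 0 := by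
  simp [vmin, Finset.inf_eq_top_iff, hv0, funext_iff]

theorem exists_vmin_eq_coe (hv0 : ∀ a : K, v a = ⊤ ↔ a = 0) {x : Fin n → K} (hx : x ≠ 0) :
    ∃ d : ℤ, vmin v x = d :=
  (WithTop.ne_top_iff_exists.mp ((vmin_eq_top_iff hv0).not.mpr hx)).imp fun _ => Eq.symm

theorem exists_val_units_eq_coe (hv0 : ∀ a : K, v a = ⊤ ↔ a = 0) (u : Kˣ) :
    ∃ d : ℤ, v u = d :=
  (WithTop.ne_top_iff_exists.mp ((hv0 _).not.mpr u.ne_zero)).imp fun _ => Eq.symm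

end VectorValuation

section ConeLayer

variable {K : Type*} [Field K] {v : K → WithTop ℤ} {Λ : Subgroup Kˣ} {n : ℕ}
  {M : Type*} [AddCommGroup M] [Module K M] {X : Set (Fin n → K)} {π : (Fin n → K) →ₗ[K] M}

variable (v Λ X π) in
def coneLayer (i : ℤ) : Set M :=
  {y | ∃ lam ∈ Λ, ∃ x ∈ X, x ≠ 0 ∧ vmin v x = (i : WithTop ℤ) ∧ y = ((lam : Kˣ) : K) • π x}

theorem coneLayer_subset_image_diff (hX : ∀ lam ∈ Λ, ∀ x ∈ X, ((lam : Kˣ) : K) • x ∈ X)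
    (hπ : ∀ x ∈ X, x ≠ 0 → π x ≠ 0) (i : ℤ) : coneLayer v Λ X π i ⊆ π '' X \ {0} := by
  rintro _ ⟨lam, hlam, x, hx, hx0, -, rfl⟩
  exact ⟨⟨_, hX lam hlam x hx, map_smul π _ x⟩, smul_ne_zero lam.ne_zero (hπ x hx hx0)⟩

theorem map_mem_coneLayer_emod (hvmul : ∀ a b : K, v (a * b) = v a + v b) {e : ℤ}
    (hΛ : ∀ k : ℤ, e ∣ k → ∃ lam ∈ Λ, v ((lam : Kˣ) : K) = k)
    (hX : ∀ lam ∈ Λ, ∀ x ∈ X, ((lam : Kˣ) : K) • x ∈ X)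
    {x : Fin n → K} (hx : x ∈ X) (hx0 : x ≠ 0) {d : ℤ} (hd : vmin v x = d) :
    π x ∈ coneLayer v Λ X π (d % e) := by
  obtain ⟨lam, hlam, hv⟩ := hΛ (-(e * (d / e))) (dvd_neg.2 (dvd_mul_right _ _))
  refine ⟨lam⁻¹, inv_mem hlam, (lam : K) • x, hX lam hlam x hx, smul_ne_zero lam.ne_zero hx0,
    ?_, ?_⟩
  · rw [vmin_smul hvmul, hv, hd, ← WithTop.coe_add, Int.emod_def]
    congr 1
    ring
  · rw [map_smul, smul_smul, Units.inv_mul, one_smul]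

theorem dvd_sub_of_mem_coneLayer (hv0 : ∀ a : K, v a = ⊤ ↔ a = 0)
    (hvmul : ∀ a b : K, v (a * b) = v a + v b) {e : ℤ}
    (hΛ : ∀ lam ∈ Λ, ∀ k : ℤ, v ((lam : Kˣ) : K) = k → e ∣ k)
    (hX : ∀ lam ∈ Λ, ∀ x ∈ X, ((lam : Kˣ) : K) • x ∈ X) (hπ : Set.InjOn π X)
    {i j : ℤ} {y : M} (hi : y ∈ coneLayer v Λ X π i) (hj : y ∈ coneLayer v Λ X π j) :
    e ∣ j - i := by
  obtain ⟨lam₁, h₁, x₁, hx₁, -, hv₁, rfl⟩ := hi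
  obtain ⟨lam₂, h₂, x₂, hx₂, -, hv₂, hy⟩ := hj
  have hx : (lam₁ : K) • x₁ = (lam₂ : K) • x₂ :=
    hπ (hX _ h₁ _ hx₁) (hX _ h₂ _ hx₂) (by rw [map_smul, map_smul, hy])
  obtain ⟨d₁, hd₁⟩ := exists_val_units_eq_coe hv0 lam₁
  obtain ⟨d₂, hd₂⟩ := exists_val_units_eq_coe hv0 lam₂
  have hval := congrArg (vmin v) hx
  rw [vmin_smul hvmul, vmin_smul hvmul, hd₁, hd₂, hv₁, hv₂] at hval
  have hsum : d₁ + i = d₂ + j := by exact_mod_cast hval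
  rw [show j - i = d₁ - d₂ by omega]
  exact dvd_sub (hΛ _ h₁ _ hd₁) (hΛ _ h₂ _ hd₂)

end ConeLayer

theorem image_cone_eq_disjoint_union_general {K : Type*} [Field K] (v : K → WithTop ℤ)
    (hv0 : ∀ a : K, v a = ⊤ ↔ a = 0)
    (hvmul : ∀ a b : K, v (a * b) = v a + v b)
    (e : ℕ) (he : 1 ≤ e)
    (Λ : Subgroup Kˣ)
    (hΛ : ∀ k : ℤ, (∃ lam ∈ Λ, v ((lam : Kˣ) : K) = (k : WithTop ℤ)) ↔ (e : ℤ) ∣ k)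
    (n m : ℕ) (P : Submodule K (Fin n → K))
    (X : Set (Fin n → K)) (hXP : X ⊆ (P : Set (Fin n → K)))
    (hXcone : ∀ lam ∈ Λ, ((lam : Kˣ) : K) • X = X)
    (π : (Fin n → K) →ₗ[K] (Fin m → K)) (hπ : Set.InjOn π (P : Set (Fin n → K)))
    (A : ℕ → Set (Fin m → K))
    (hA : ∀ i : ℕ, A i = {y : Fin m → K | ∃ lam ∈ Λ, ∃ x ∈ X,
      x ≠ 0 ∧ vmin v x = ((i : ℤ) : WithTop ℤ) ∧ y = ((lam : Kˣ) : K) • π x}) :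
    ((π '' X) \ {0} = ⋃ i ∈ Finset.range e, A i) ∧
      ∀ i < e, ∀ j < e, i ≠ j → Disjoint (A i) (A j) := by
  obtain rfl : A = fun i : ℕ => coneLayer v Λ X π i := funext hA
  have hX : ∀ lam ∈ Λ, ∀ x ∈ X, ((lam : Kˣ) : K) • x ∈ X := fun lam hlam x hx =>
    hXcone lam hlam ▸ Set.smul_mem_smul_set hx
  have hπ0 : ∀ x ∈ X, x ≠ 0 → π x ≠ 0 := fun x hx hx0 h =>
    hx0 (hπ (hXP hx) P.zero_mem (h.trans π.map_zero.symm))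
  refine ⟨Set.Subset.antisymm ?_
    (Set.iUnion₂_subset fun i _ => coneLayer_subset_image_diff hX hπ0 i), ?_⟩
  · rintro _ ⟨⟨x, hx, rfl⟩, hπx0⟩
    have hx0 : x ≠ 0 := by rintro rfl; exact hπx0 π.map_zero
    obtain ⟨d, hd⟩ := exists_vmin_eq_coe hv0 hx0
    have he' : (0 : ℤ) < e := by omega
    have hlt := Int.emod_lt_of_pos d he'
    have hnonneg := Int.emod_nonneg d he'.ne'
    refine Set.mem_iUnion₂.2 ⟨(d % e).toNat, Finset.mem_range.2 (by omega), ?_⟩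
    show π x ∈ coneLayer v Λ X π ((d % e).toNat : ℤ)
    rw [Int.toNat_of_nonneg hnonneg]
    exact map_mem_coneLayer_emod hvmul (fun k hk => (hΛ k).2 hk) hX hx hx0 hd
  · intro i hi j hj hij
    refine Set.disjoint_left.2 fun y hyi hyj => hij (Nat.ModEq.eq_of_lt_of_lt ?_ hi hj)
    exact Nat.modEq_iff_dvd.2 (dvd_sub_of_mem_coneLayer hv0 hvmul
      (fun lam hlam k hk => (hΛ k).1 ⟨lam, hlam, hk⟩) hX (hπ.mono hXP) hyi hyj)

/-- Let `K` be a field with surjective discrete valuation `v`, `e ≥ 1`, and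
`Λ ≤ Kˣ` a subgroup with `v(Λ) = eℤ`. Let `Π ⊆ K^n` be a subspace, `X ⊆ Π` a `Λ`-cone
(`λ·X = X` for all `λ ∈ Λ`), and `π : K^n → K^m` a `K`-linear map injective on `Π`. For
`0 ≤ i ≤ e−1` let `A_i = {λ·π(x) : λ ∈ Λ, x ∈ X \ {0}, v x = i}`. Then
`π(X) \ {0} = A_0 ∪ ⋯ ∪ A_{e−1}`, and the `A_i` are pairwise disjoint. -/
theorem image_cone_eq_disjoint_union {K : Type*} [Field K] (v : K → WithTop ℤ)
    (hv0 : ∀ a : K, v a = ⊤ ↔ a = 0)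
    (hvmul : ∀ a b : K, v (a * b) = v a + v b)
    (hvadd : ∀ a b : K, min (v a) (v b) ≤ v (a + b))
    (hvsurj : ∀ k : ℤ, ∃ a : K, v a = (k : WithTop ℤ))
    (e : ℕ) (he : 1 ≤ e)
    (Λ : Subgroup Kˣ)
    (hΛ : ∀ k : ℤ, (∃ lam ∈ Λ, v ((lam : Kˣ) : K) = (k : WithTop ℤ)) ↔ (e : ℤ) ∣ k)
    (n m : ℕ) (P : Submodule K (Fin n → K))
    (X : Set (Fin n → K)) (hXP : X ⊆ (P : Set (Fin n → K)))
    (hXcone : ∀ lam ∈ Λ, ((lam : Kˣ) : K) • X = X)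
    (π : (Fin n → K) →ₗ[K] (Fin m → K)) (hπ : Set.InjOn π (P : Set (Fin n → K)))
    (A : ℕ → Set (Fin m → K))
    (hA : ∀ i : ℕ, A i = {y : Fin m → K | ∃ lam ∈ Λ, ∃ x ∈ X,
      x ≠ 0 ∧ vmin v x = ((i : ℤ) : WithTop ℤ) ∧ y = ((lam : Kˣ) : K) • π x}) :
    ((π '' X) \ {0} = ⋃ i ∈ Finset.range e, A i) ∧
      ∀ i < e, ∀ j < e, i ≠ j → Disjoint (A i) (A j) :=
  image_cone_eq_disjoint_union_general v hv0 hvmul e he Λ hΛ n m P X hXP hXcone π hπ A hA
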